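/- arXiv:2404.03848 — 2 statements merged into one kernel-verified Lean document; each statement's English description precedes it below -/
import Mathlib

section
/- Let T be a Hausdorff topological group and let S be a closed subsemigroup of T that contains a co-compact closed subgroup H of T. Then S is itself a co-compact closed subgroup of T. -/
/-!
For `k ∈ S` the translates `k • S` are closed and right `H`-invariant, so they are the preimages
of closed subsets of the compact space `T ⧸ H`; hence a chain of them has nonempty intersection,
and any point `a` of it gives a translate `a • S` below the chain. By Zorn's lemma some `m • S` is
minimal. For `u ∈ S` we have `(m * u) • S ⊆ m • S`, so by minimality `m ∈ (m * u) • S`, i.e.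
`u⁻¹ ∈ S`. Thus `S` is a subgroup, and `T ⧸ S` is a continuous image of `T ⧸ H`.
-/

open Pointwise

theorem Submonoid.smul_coe_subset_smul_coe_iff {M : Type*} [Monoid M] (S : Submonoid M)
    {a k : M} :
    a • (S : Set M) ⊆ k • (S : Set M) ↔ a ∈ k • (S : Set M) := by
  constructor
  · intro h
    simpa using h (Set.smul_mem_smul_set (a := a) S.one_mem)
  · rintro ⟨s, hs, rfl⟩
    rw [Set.smul_set_subset_iff]
    intro b hb
    exact ⟨s * b, S.mul_mem hs hb, by simp [mul_assoc]⟩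

section

variable {G : Type*} [Group G] [TopologicalSpace G]

theorem QuotientGroup.nonempty_sInter_of_directedOn
    {H : Subgroup G} [CompactSpace (G ⧸ H)] {𝒜 : Set (Set G)} [Nonempty 𝒜]
    (hd : DirectedOn (· ⊇ ·) 𝒜) (hne : ∀ A ∈ 𝒜, A.Nonempty) (hcl : ∀ A ∈ 𝒜, IsClosed A)
    (hH : ∀ A ∈ 𝒜, A * H ⊆ A) : (⋂₀ 𝒜).Nonempty := by
  have hsat : ∀ A ∈ 𝒜, mk ⁻¹' (mk '' A : Set (G ⧸ H)) = A := fun A hA =>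
    (preimage_image_mk_eq_mul H A).trans <| (hH A hA).antisymm (Set.subset_mul_left A H.one_mem)
  have himage_closed : ∀ A ∈ 𝒜, IsClosed (mk '' A : Set (G ⧸ H)) := fun A hA =>
    (isQuotientMap_mk H).isClosed_preimage.mp <| (hsat A hA).symm ▸ hcl A hA
  obtain ⟨x, hx⟩ := IsCompact.nonempty_iInter_of_directed_nonempty_isCompact_isClosed
    (fun A : 𝒜 => (mk '' (A : Set G) : Set (G ⧸ H)))
    (hd.directed_val.mono_comp (g := Set.image mk) _ fun _ _ => Set.image_mono)
    (fun A => (hne A A.2).image _) (fun A => (himage_closed A A.2).isCompact)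
    (fun A => himage_closed A A.2)
  obtain ⟨a, rfl⟩ := mk_surjective x
  refine ⟨a, fun A hA => ?_⟩
  rw [← hsat A hA]
  exact Set.mem_iInter.mp hx ⟨A, hA⟩

theorem Subgroup.compactSpace_quotient_of_le {H K : Subgroup G} (h : H ≤ K)
    [CompactSpace (G ⧸ H)] : CompactSpace (G ⧸ K) :=
  Function.Surjective.compactSpace (f := quotientMapOfLE h)
    ((QuotientGroup.isQuotientMap_mk H).continuous_iff.mpr QuotientGroup.continuous_mk)
    fun x => QuotientGroup.induction_on x fun a => ⟨a, rfl⟩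

variable [ContinuousMul G]

theorem Submonoid.exists_minimal_smul_of_cocompact (S : Submonoid G) (hS : IsClosed (S : Set G))
    {H : Subgroup G} [CompactSpace (G ⧸ H)] (hHS : (H : Set G) ⊆ S) :
    ∃ m ∈ S, ∀ k ∈ S, k • (S : Set G) ⊆ m • S → m • (S : Set G) ⊆ k • S := by
  let 𝒯 : Set (Set G) := (fun k : G => k • (S : Set G)) '' S
  have hlb : ∀ c ⊆ 𝒯, IsChain (· ⊆ ·) c → c.Nonempty → ∃ lb ∈ 𝒯, ∀ A ∈ c, lb ⊆ A := by
    intro c hc hchain ⟨A₀, hA₀⟩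
    have : Nonempty c := ⟨⟨A₀, hA₀⟩⟩
    obtain ⟨a, ha⟩ := QuotientGroup.nonempty_sInter_of_directedOn (H := H)
      (IsChain.directedOn (r := fun A B : Set G => A ⊇ B) hchain.symm)
      (fun A hA => by
        obtain ⟨k, -, rfl⟩ := hc hA
        exact ⟨k, S.smul_coe_subset_smul_coe_iff.mp le_rfl⟩)
      (fun A hA => by
        obtain ⟨k, -, rfl⟩ := hc hA
        exact hS.smul k)
      (fun A hA => by
        obtain ⟨k, -, rfl⟩ := hc hA
        rw [Set.mul_subset_iff]
        exact fun x hx y hy =>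
          S.smul_coe_subset_smul_coe_iff.mpr hx (Set.smul_mem_smul_set (hHS hy)))
    have haS : a ∈ S := by
      obtain ⟨k₀, hk₀, rfl⟩ := hc hA₀
      obtain ⟨s, hs, rfl⟩ := ha _ hA₀
      exact S.mul_mem hk₀ hs
    refine ⟨a • (S : Set G), ⟨a, haS, rfl⟩, fun A hA => ?_⟩
    obtain ⟨k, -, rfl⟩ := hc hA
    exact S.smul_coe_subset_smul_coe_iff.mpr (ha _ hA)
  obtain ⟨-, -, ⟨m, hm, rfl⟩, hmin⟩ :=
    zorn_superset_nonempty 𝒯 hlb S ⟨1, S.one_mem, one_smul _ _⟩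
  exact ⟨m, hm, fun k hk hkm => hmin ⟨k, hk, rfl⟩ hkm⟩

theorem Submonoid.inv_mem_of_cocompact (S : Submonoid G) (hS : IsClosed (S : Set G))
    {H : Subgroup G} [CompactSpace (G ⧸ H)] (hHS : (H : Set G) ⊆ S) {u : G} (hu : u ∈ S) :
    u⁻¹ ∈ S := by
  obtain ⟨m, hm, hmin⟩ := S.exists_minimal_smul_of_cocompact hS hHS
  have hmu : (m * u) • (S : Set G) ⊆ m • S :=
    S.smul_coe_subset_smul_coe_iff.mpr (Set.smul_mem_smul_set hu)
  obtain ⟨s, hs, hmus⟩ := S.smul_coe_subset_smul_coe_iff.mp (hmin _ (S.mul_mem hm hu) hmu)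
  have hus : u * s = 1 := by simpa [mul_assoc] using hmus
  rwa [inv_eq_of_mul_eq_one_right hus]

end

theorem cocompact_subgroup_of_closed_subsemigroup_general
    {T : Type*} [Group T] [TopologicalSpace T] [IsTopologicalGroup T]
    (S : Set T) (hclosed : IsClosed S)
    (hmul : ∀ a ∈ S, ∀ b ∈ S, a * b ∈ S)
    (H : Subgroup T) (hcc : CompactSpace (T ⧸ H))
    (hHS : (H : Set T) ⊆ S) :
    ∃ S' : Subgroup T, (S' : Set T) = S ∧ CompactSpace (T ⧸ S') := by
  let M : Submonoid T :=
    { carrier := S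
      mul_mem' := fun ha hb => hmul _ ha _ hb
      one_mem' := hHS H.one_mem }
  let S' : Subgroup T :=
    { M with inv_mem' := fun hu => M.inv_mem_of_cocompact hclosed hHS hu }
  exact ⟨S', rfl, Subgroup.compactSpace_quotient_of_le (H := H) hHS⟩

/-- A closed subsemigroup `S` of a Hausdorff topological group `T` containing a co-compact
closed subgroup `H` of `T` is itself a co-compact closed subgroup of `T`. -/
theorem cocompact_subgroup_of_closed_subsemigroup
    {T : Type*} [Group T] [TopologicalSpace T] [IsTopologicalGroup T] [T2Space T]
    (S : Set T) (hne : S.Nonempty) (hclosed : IsClosed S)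
    (hmul : ∀ a ∈ S, ∀ b ∈ S, a * b ∈ S)
    (H : Subgroup T) (hHclosed : IsClosed (H : Set T)) (hcc : CompactSpace (T ⧸ H))
    (hHS : (H : Set T) ⊆ S) :
    ∃ S' : Subgroup T, (S' : Set T) = S ∧ CompactSpace (T ⧸ S') :=
  cocompact_subgroup_of_closed_subsemigroup_general S hclosed hmul H hcc hHS
end

section
/- Let T be a Hausdorff topological group acting continuously and minimally on a compact Hausdorff space X, and let H be a normal co-compact closed subgroup of T. Then the H-orbital closure relation R_H = {(x, x') ∈ X × X : x' ∈ cl(H·x)} is an equivalence relation on X, is closed as a subset of X × X, and is T-invariant (if (x,x') ∈ R_H then (t·x, t·x') ∈ R_H for all t ∈ T). -/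
/-!
Zorn's lemma gives a minimal `H`-invariant closed set `M`, and because `H` is normal every
translate `t • M` is again `H`-minimal. The union `⋃ t, t • M` is the projection of a closed subset
of `T × X` that is saturated for `T → T ⧸ H`, hence of a closed subset of `(T ⧸ H) × X`; since
`T ⧸ H` is compact it is closed, and being `T`-invariant it is all of `X` by minimality of the flow.
So every `H`-orbit closure is one of the minimal sets `t • M`, and these partition `X`; the relation
`R_H = ⋃ t, t • (M ×ˢ M)` is closed by the same projection argument on `X × X`.
-/

open MulAction Set Pointwise

section MinimalSet

variable {X : Type*} [TopologicalSpace X]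

/-- Equivalently, `M` is nonempty, closed and invariant, with no proper subset of that kind. -/
def IsMinimalSet (G : Type*) [Monoid G] [MulAction G X] (M : Set X) : Prop :=
  M.Nonempty ∧ ∀ y ∈ M, closure (orbit G y) = M

variable {G : Type*} [Monoid G] [MulAction G X] {M : Set X}

theorem IsMinimalSet.isClosed (hM : IsMinimalSet G M) : IsClosed M := by
  obtain ⟨⟨y, hy⟩, hM⟩ := hM
  exact hM y hy ▸ isClosed_closure

theorem IsMinimalSet.smul_subset [ContinuousConstSMul G X] (hM : IsMinimalSet G M) (g : G) :
    g • M ⊆ M := by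
  obtain ⟨⟨y, hy⟩, hM⟩ := hM
  exact hM y hy ▸ smul_closure_orbit_subset g y

variable (G) in
theorem exists_isMinimalSet [ContinuousConstSMul G X] [CompactSpace X] [Nonempty X] :
    ∃ M : Set X, IsMinimalSet G M := by
  let S : Set (Set X) := {F | F.Nonempty ∧ IsClosed F ∧ ∀ g : G, g • F ⊆ F}
  have hchain : ∀ c ⊆ S, IsChain (· ⊆ ·) c → c.Nonempty → ∃ lb ∈ S, ∀ F ∈ c, lb ⊆ F := by
    intro c hcS hc hne
    have : Nonempty c := hne.to_subtype
    refine ⟨⋂₀ c, ⟨?_, isClosed_sInter fun F hF => (hcS hF).2.1, ?_⟩,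
      fun _ => sInter_subset_of_mem⟩
    · have hdir : DirectedOn (· ⊇ ·) c := fun F₁ h₁ F₂ h₂ =>
        (hc.total h₁ h₂).elim (fun h => ⟨F₁, h₁, subset_rfl, h⟩) fun h => ⟨F₂, h₂, h, subset_rfl⟩
      exact IsCompact.nonempty_sInter_of_directed_nonempty_isCompact_isClosed hdir
        (fun F hF => (hcS hF).1) (fun F hF => (hcS hF).2.1.isCompact) fun F hF => (hcS hF).2.1
    · rintro g _ ⟨x, hx, rfl⟩
      exact mem_sInter.2 fun F hF => (hcS hF).2.2 g (smul_mem_smul_set (hx F hF))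
  obtain ⟨M, -, hM⟩ := zorn_superset_nonempty S hchain univ
    ⟨univ_nonempty, isClosed_univ, fun _ => subset_univ _⟩
  refine ⟨M, hM.prop.1, fun y hy => ?_⟩
  have hsub : closure (orbit G y) ⊆ M := closure_minimal
    (by rintro _ ⟨g, rfl⟩; exact hM.prop.2.2 g (smul_mem_smul_set hy)) hM.prop.2.1
  exact hsub.antisymm (hM.2 ⟨⟨y, subset_closure (mem_orbit_self y)⟩, isClosed_closure,
    fun g => smul_closure_orbit_subset g y⟩ hsub)

end MinimalSet

section NormalSubgroup

variable {T X : Type*} [Group T] [TopologicalSpace X] [MulAction T X] [ContinuousConstSMul T X]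
  (H : Subgroup T) [H.Normal]

theorem smul_closure_orbit_eq_closure_orbit_smul (t : T) (a : X) :
    t • closure (orbit H a) = closure (orbit H (t • a)) := by
  rw [← closure_smul, smul_orbit_eq_orbit_smul]

variable {H} in
theorem IsMinimalSet.smul {M : Set X} (hM : IsMinimalSet H M) (t : T) :
    IsMinimalSet H (t • M) := by
  refine ⟨hM.1.smul_set, fun y hy => ?_⟩
  rw [← smul_inv_smul t y, ← smul_closure_orbit_eq_closure_orbit_smul H,
    hM.2 _ (mem_smul_set_iff_inv_smul_mem.mp hy)]

end NormalSubgroup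

section CocompactSubgroup

variable {T Z : Type*} [Group T] [TopologicalSpace T] [IsTopologicalGroup T]
  [TopologicalSpace Z] [MulAction T Z] [ContinuousSMul T Z]
  (H : Subgroup T) [CompactSpace (T ⧸ H)]

theorem isClosed_iUnion_smul_of_compactSpace_quotient {N : Set Z} (hN : IsClosed N)
    (hHN : ∀ h : H, h • N ⊆ N) : IsClosed (⋃ t : T, t • N) := by
  let C : Set (T × Z) := {q | q.1⁻¹ • q.2 ∈ N}
  let f : T × Z → (T ⧸ H) × Z := Prod.map QuotientGroup.mk id
  have hf : Topology.IsQuotientMap f :=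
    (QuotientGroup.isOpenQuotientMap_mk.prodMap IsOpenQuotientMap.id).isQuotientMap
  have hC : IsClosed C := hN.preimage (continuous_fst.inv.smul continuous_snd)
  have hsat : f ⁻¹' (f '' C) = C := by
    refine (subset_preimage_image f C).antisymm' ?_
    rintro ⟨s, z⟩ ⟨⟨t, z'⟩, htz, hfeq⟩
    obtain ⟨hts, rfl : z' = z⟩ := Prod.ext_iff.mp hfeq
    have hh : (t⁻¹ * s)⁻¹ ∈ H := H.inv_mem (QuotientGroup.eq.mp hts)
    have := hHN ⟨_, hh⟩ (smul_mem_smul_set htz)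
    simpa [C, smul_smul, mul_assoc] using this
  have hunion : (⋃ t : T, t • N) = Prod.snd '' (f '' C) := by
    ext z
    simp [C, f, mem_smul_set_iff_inv_smul_mem]
  rw [hunion]
  exact isClosedMap_snd_of_compactSpace _ (hf.isClosed_preimage.mp (by rwa [hsat]))

theorem exists_mem_smul_of_isMinimal [IsMinimal T Z] {N : Set Z} (hne : N.Nonempty)
    (hN : IsClosed N) (hHN : ∀ h : H, h • N ⊆ N) (z : Z) : ∃ t : T, z ∈ t • N := by
  have hinv : ∀ c : T, c • ⋃ t : T, t • N ⊆ ⋃ t : T, t • N := fun c => by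
    rw [smul_set_iUnion]
    exact iUnion_subset fun t => smul_smul c t N ▸ subset_iUnion (· • N) (c * t)
  have hne' : (⋃ t : T, t • N).Nonempty := hne.mono (subset_iUnion_of_subset 1 (one_smul T N).ge)
  have huniv := (eq_empty_or_univ_of_smul_invariant_closed T
    (isClosed_iUnion_smul_of_compactSpace_quotient H hN hHN) hinv).resolve_left hne'.ne_empty
  exact mem_iUnion.mp (huniv ▸ mem_univ z)

end CocompactSubgroup

section OrbitClosureRelation

variable {T X : Type*} [Group T] [TopologicalSpace T] [IsTopologicalGroup T]
  [TopologicalSpace X] [CompactSpace X] [MulAction T X] [ContinuousSMul T X] [IsMinimal T X]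
  (H : Subgroup T) [CompactSpace (T ⧸ H)]

theorem exists_isMinimalSet_forall_exists_mem_smul [Nonempty X] :
    ∃ M : Set X, IsMinimalSet H M ∧ ∀ x : X, ∃ t : T, x ∈ t • M := by
  obtain ⟨M, hM⟩ := exists_isMinimalSet H (X := X)
  exact ⟨M, hM, exists_mem_smul_of_isMinimal H hM.1 hM.isClosed hM.smul_subset⟩

variable [H.Normal]

theorem closure_orbit_eq_of_mem_closure_orbit {a b : X} (hb : b ∈ closure (orbit H a)) :
    closure (orbit H b) = closure (orbit H a) := by
  have : Nonempty X := ⟨a⟩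
  obtain ⟨M, hM, hcover⟩ := exists_isMinimalSet_forall_exists_mem_smul H (X := X)
  obtain ⟨t, ha⟩ := hcover a
  have hMa := (hM.smul t).2 a ha
  rw [hMa, (hM.smul t).2 b (hMa ▸ hb)]

theorem isClosed_setOf_mem_closure_orbit :
    IsClosed {p : X × X | p.2 ∈ closure (orbit H p.1)} := by
  rcases isEmpty_or_nonempty X with hX | hX
  · exact subsingleton_of_subsingleton.isClosed
  obtain ⟨M, hM, hcover⟩ := exists_isMinimalSet_forall_exists_mem_smul H (X := X)
  have hrel : {p : X × X | p.2 ∈ closure (orbit H p.1)} = ⋃ t : T, t • (M ×ˢ M) := by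
    ext ⟨x, y⟩
    simp only [mem_ofPred_eq, mem_iUnion, smul_set_prod, mem_prod]
    constructor
    · intro hy
      obtain ⟨t, hx⟩ := hcover x
      exact ⟨t, hx, (hM.smul t).2 x hx ▸ hy⟩
    · rintro ⟨t, hx, hy⟩
      rwa [(hM.smul t).2 x hx]
  rw [hrel]
  refine isClosed_iUnion_smul_of_compactSpace_quotient H (hM.isClosed.prod hM.isClosed) fun h => ?_
  rw [smul_set_prod]
  exact prod_mono (hM.smul_subset h) (hM.smul_subset h)

end OrbitClosureRelation

theorem orbitalClosureRelation_closed_invariant_equivalence_general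
    {T X : Type*} [Group T] [TopologicalSpace T] [IsTopologicalGroup T]
    [TopologicalSpace X] [CompactSpace X] [MulAction T X] [ContinuousSMul T X]
    (hmin : ∀ x : X, Dense (orbit T x))
    (H : Subgroup T) [H.Normal]
    (hcc : CompactSpace (T ⧸ H)) :
    Equivalence (fun a b : X => b ∈ closure (orbit H a)) ∧
    IsClosed {p : X × X | p.2 ∈ closure (orbit H p.1)} ∧
    ∀ (t : T) (a b : X), b ∈ closure (orbit H a) → t • b ∈ closure (orbit H (t • a)) := by
  have : IsMinimal T X := ⟨hmin⟩
  have mem_self (a : X) : a ∈ closure (orbit H a) := subset_closure (mem_orbit_self a)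
  refine ⟨⟨mem_self, fun hb => ?_, fun hb hc => ?_⟩, isClosed_setOf_mem_closure_orbit H,
    fun t a b hb => ?_⟩
  · exact closure_orbit_eq_of_mem_closure_orbit H hb ▸ mem_self _
  · exact closure_orbit_eq_of_mem_closure_orbit H hb ▸ hc
  · exact smul_closure_orbit_eq_closure_orbit_smul H t a ▸ smul_mem_smul_set hb

/-- If the `T`-flow on a compact Hausdorff space `X` is minimal and `H` is a normal
co-compact closed subgroup of `T`, then the `H`-orbital closure relation
`R_H = {(x, x') | x' ∈ cl(H·x)}` is an equivalence relation, closed in `X × X`,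
and `T`-invariant. -/
theorem orbitalClosureRelation_closed_invariant_equivalence
    {T X : Type*} [Group T] [TopologicalSpace T] [IsTopologicalGroup T] [T2Space T]
    [TopologicalSpace X] [CompactSpace X] [T2Space X] [MulAction T X] [ContinuousSMul T X]
    (hmin : ∀ x : X, Dense (orbit T x))
    (H : Subgroup T) [H.Normal] (hHclosed : IsClosed (H : Set T))
    (hcc : CompactSpace (T ⧸ H)) :
    Equivalence (fun a b : X => b ∈ closure (orbit H a)) ∧
    IsClosed {p : X × X | p.2 ∈ closure (orbit H p.1)} ∧
    ∀ (t : T) (a b : X), b ∈ closure (orbit H a) → t • b ∈ closure (orbit H (t • a)) :=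
  orbitalClosureRelation_closed_invariant_equivalence_general hmin H hcc
end
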